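/- Let p ∈ (0,1), c > 0, μ ∈ ℝ, and 0 < Σ₀ < Σ₁, let D = μ² + (Σ₁ − Σ₀)(log(Σ₁/Σ₀) + 2 log((1−p)/(cp))) ≥ 0, and let y₋ = (−Σ₀μ − √(Σ₀Σ₁D))/(Σ₁ − Σ₀), y₊ = (−Σ₀μ + √(Σ₀Σ₁D))/(Σ₁ − Σ₀). Then the Type I error probability of the test that decides H = 0 on [y₋, y₊] satisfies ∫_{ℝ \ [y₋, y₊]} φ(y; 0, Σ₀) dy = Φ((√Σ₀ μ − √(Σ₁D))/(Σ₁ − Σ₀)) + Φ((−√Σ₀ μ − √(Σ₁D))/(Σ₁ − Σ₀)). -/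

import Mathlib

open MeasureTheory

/-- The Gaussian probability density function with mean `m` and variance `v`. -/
noncomputable def gaussPDF (m v y : ℝ) : ℝ :=
  (Real.sqrt (2 * Real.pi * v))⁻¹ * Real.exp (-(y - m) ^ 2 / (2 * v))

/-- The standard Gaussian cumulative distribution function. -/
noncomputable def stdGaussCDF (z : ℝ) : ℝ := ∫ t in Set.Iic z, gaussPDF 0 1 t

/-! The complement of `[y₋, y₊]` is the union of two half-lines. The substitution
`y = m + √v z` turns a tail of `φ(·; m, v)` into a tail of `φ(·; 0, 1)`, and the symmetry of the
standard density turns an upper tail into a value of `Φ`; so the error probability is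
`Φ(y₋/√Σ₀) + Φ(-y₊/√Σ₀)`, and `√(Σ₀Σ₁D) = √Σ₀ √(Σ₁D)` puts the arguments into the stated form. -/

open Set Real ProbabilityTheory

theorem integral_comp_sub_right_Ioi {E : Type*} [NormedAddCommGroup E] [NormedSpace ℝ E]
    (g : ℝ → E) (a b : ℝ) : ∫ x in Ioi a, g (x - b) = ∫ x in Ioi (a - b), g x := by
  rw [← integral_indicator measurableSet_Ioi, ← integral_indicator measurableSet_Ioi,
    ← integral_sub_right_eq_self ((Ioi (a - b)).indicator g) b]
  congr 1
  ext1 x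
  rw [← indicator_comp_right (fun x => x - b), preimage_sub_const_Ioi, sub_add_cancel]
  rfl

lemma gaussPDF_eq_gaussianPDFReal (m : ℝ) {v : ℝ} (hv : 0 ≤ v) :
    gaussPDF m v = gaussianPDFReal m ⟨v, hv⟩ := rfl

lemma integrable_gaussPDF (m : ℝ) {v : ℝ} (hv : 0 ≤ v) : Integrable (gaussPDF m v) := by
  rw [gaussPDF_eq_gaussianPDFReal m hv]
  exact integrable_gaussianPDFReal _ _

lemma gaussPDF_neg (m v y : ℝ) : gaussPDF m v (-y) = gaussPDF (-m) v y := by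
  simp only [gaussPDF]
  ring_nf

lemma gaussPDF_eq_inv_sqrt_mul (m : ℝ) {v : ℝ} (hv : 0 < v) (y : ℝ) :
    gaussPDF m v y = (√v)⁻¹ * gaussPDF 0 1 ((√v)⁻¹ * (y - m)) := by
  simp only [gaussPDF, sub_zero, mul_one, mul_pow, inv_pow, sq_sqrt hv.le, sqrt_mul' _ hv.le,
    mul_inv]
  field_simp

lemma integral_Ioi_gaussPDF (m : ℝ) {v : ℝ} (hv : 0 < v) (a : ℝ) :
    ∫ y in Ioi a, gaussPDF m v y = stdGaussCDF ((m - a) / √v) := by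
  have hs : 0 < (√v)⁻¹ := inv_pos.2 (sqrt_pos.2 hv)
  calc ∫ y in Ioi a, gaussPDF m v y
      = (√v)⁻¹ * ∫ y in Ioi (a - m), gaussPDF 0 1 ((√v)⁻¹ * y) := by
        simp_rw [gaussPDF_eq_inv_sqrt_mul m hv, integral_const_mul]
        rw [integral_comp_sub_right_Ioi (fun z => gaussPDF 0 1 ((√v)⁻¹ * z))]
    _ = ∫ y in Ioi ((a - m) / √v), gaussPDF 0 1 y := by
        rw [integral_comp_mul_left_Ioi _ _ hs, smul_eq_mul, ← mul_assoc,
          mul_inv_cancel₀ hs.ne', one_mul, inv_mul_eq_div]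
    _ = stdGaussCDF ((m - a) / √v) := by
        rw [← neg_sub, neg_div, ← integral_comp_neg_Iic]
        simp_rw [gaussPDF_neg, neg_zero]
        rfl

lemma integral_Iic_gaussPDF (m : ℝ) {v : ℝ} (hv : 0 < v) (a : ℝ) :
    ∫ y in Iic a, gaussPDF m v y = stdGaussCDF ((a - m) / √v) := by
  calc ∫ y in Iic a, gaussPDF m v y
      = ∫ y in Iic a, gaussPDF (-m) v (-y) := by simp_rw [gaussPDF_neg, neg_neg]
    _ = ∫ y in Ioi (-a), gaussPDF (-m) v y := integral_comp_neg_Iic a _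
    _ = stdGaussCDF ((a - m) / √v) := by rw [integral_Ioi_gaussPDF _ hv, neg_sub_neg]

lemma integral_compl_Icc_gaussPDF (m : ℝ) {v : ℝ} (hv : 0 < v) {a b : ℝ} (hab : a ≤ b) :
    ∫ y in (Icc a b)ᶜ, gaussPDF m v y =
      stdGaussCDF ((a - m) / √v) + stdGaussCDF ((m - b) / √v) := by
  have hint := integrable_gaussPDF m hv.le
  have hdisj : Disjoint (Iio a) (Ioi b) := (Iic_disjoint_Ioi hab).mono_left Iio_subset_Iic_self
  have hsplit : (Icc a b)ᶜ = Iio a ∪ Ioi b := by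
    ext y
    simp only [mem_compl_iff, mem_Icc, not_and_or, not_le, mem_union, mem_Iio, mem_Ioi]
  rw [hsplit, setIntegral_union hdisj measurableSet_Ioi hint.integrableOn hint.integrableOn,
    ← integral_Iic_eq_integral_Iio, integral_Iic_gaussPDF m hv,
    integral_Ioi_gaussPDF m hv]

theorem stmt14_general (μ S₀ S₁ : ℝ)
    (hS₀ : 0 < S₀) (hS : S₀ < S₁)
    (D : ℝ)
    (ym yp : ℝ)
    (hym : ym = (-S₀ * μ - Real.sqrt (S₀ * S₁ * D)) / (S₁ - S₀))
    (hyp : yp = (-S₀ * μ + Real.sqrt (S₀ * S₁ * D)) / (S₁ - S₀)) :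
    (∫ y in (Set.Icc ym yp)ᶜ, gaussPDF 0 S₀ y) =
      stdGaussCDF ((Real.sqrt S₀ * μ - Real.sqrt (S₁ * D)) / (S₁ - S₀)) +
        stdGaussCDF ((-(Real.sqrt S₀) * μ - Real.sqrt (S₁ * D)) / (S₁ - S₀)) := by
  have hgap : 0 < S₁ - S₀ := sub_pos.2 hS
  have hS₀_sq : √S₀ ^ 2 = S₀ := sq_sqrt hS₀.le
  have hsqrt : √(S₀ * S₁ * D) = √S₀ * √(S₁ * D) := by rw [mul_assoc, sqrt_mul hS₀.le]
  have hle : ym ≤ yp := by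
    rw [hym, hyp]
    gcongr
    linarith [sqrt_nonneg (S₀ * S₁ * D)]
  have hlower : (ym - 0) / √S₀ = (-√S₀ * μ - √(S₁ * D)) / (S₁ - S₀) := by
    rw [hym, hsqrt]
    field_simp
    linear_combination μ * hS₀_sq
  have hupper : (0 - yp) / √S₀ = (√S₀ * μ - √(S₁ * D)) / (S₁ - S₀) := by
    rw [hyp, hsqrt]
    field_simp
    linear_combination (-μ) * hS₀_sq
  rw [integral_compl_Icc_gaussPDF 0 hS₀ hle, hlower, hupper, add_comm]

/-- Type I error probability of the test deciding `H = 0` on `[y₋, y₊]`: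
`∫_{ℝ ∖ [y₋, y₊]} φ(y; 0, Σ₀) dy
  = Φ((√Σ₀ μ − √(Σ₁D))/(Σ₁ − Σ₀)) + Φ((−√Σ₀ μ − √(Σ₁D))/(Σ₁ − Σ₀))`. -/
theorem stmt14 (p c μ S₀ S₁ : ℝ) (hp : p ∈ Set.Ioo (0 : ℝ) 1) (hc : 0 < c)
    (hS₀ : 0 < S₀) (hS : S₀ < S₁)
    (D : ℝ)
    (hD : D = μ ^ 2 + (S₁ - S₀) * (Real.log (S₁ / S₀) + 2 * Real.log ((1 - p) / (c * p))))
    (hDpos : 0 ≤ D)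
    (ym yp : ℝ)
    (hym : ym = (-S₀ * μ - Real.sqrt (S₀ * S₁ * D)) / (S₁ - S₀))
    (hyp : yp = (-S₀ * μ + Real.sqrt (S₀ * S₁ * D)) / (S₁ - S₀)) :
    (∫ y in (Set.Icc ym yp)ᶜ, gaussPDF 0 S₀ y) =
      stdGaussCDF ((Real.sqrt S₀ * μ - Real.sqrt (S₁ * D)) / (S₁ - S₀)) +
        stdGaussCDF ((-(Real.sqrt S₀) * μ - Real.sqrt (S₁ * D)) / (S₁ - S₀)) :=
  stmt14_general μ S₀ S₁ hS₀ hS D ym yp hym hyp
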